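/- arXiv:1710.00781 — 7 statements merged into one kernel-verified Lean document; each statement's English description precedes it below -/
import Mathlib

section
/- If T : ℝ_+^K → ℝ_{++} is a standard interference function (monotone and scalable), then for every x in ℝ_+^K the limit lim_{h→∞} T(h·x)/h exists in ℝ_+ (i.e., the asymptotic function T_∞ is well-defined and finite on the nonnegative orthant). -/
/-! Along the ray through `x`, scalability makes `h ↦ T (h • x) / h` strictly decreasing on `(0, ∞)`,
and positivity of `T` bounds it below by `0`; a monotone bounded function converges. -/

open Filter Set Topology

theorem strictAntiOn_div_self_of_lt_mul {g : ℝ → ℝ}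
    (hg : ∀ a, 0 < a → ∀ α, 1 < α → g (α * a) < α * g a) :
    StrictAntiOn (fun h => g h / h) (Ioi 0) := by
  intro a (ha : 0 < a) b (hb : 0 < b) hab
  have hlt : g (b / a * a) < b / a * g a := hg a ha (b / a) ((one_lt_div ha).2 hab)
  rw [div_mul_cancel₀ b ha.ne', div_mul_eq_mul_div, lt_div_iff₀ ha] at hlt
  rw [div_lt_div_iff₀ hb ha]
  linarith

theorem AntitoneOn.exists_tendsto_atTop_of_le {ι α : Type*} [LinearOrder ι]
    [ConditionallyCompleteLinearOrder α] [TopologicalSpace α] [OrderTopology α]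
    {f : ι → α} {b : ι} {c : α} (hf : AntitoneOn f (Ici b)) (hc : ∀ h ∈ Ici b, c ≤ f h) :
    ∃ L, c ≤ L ∧ Tendsto f atTop (𝓝 L) := by
  set g : ι → α := fun h => f (max h b)
  have hg : Antitone g := fun h h' hh' =>
    hf (le_max_right h b) (le_max_right h' b) (max_le_max hh' le_rfl)
  have hgc : ∀ h, c ≤ g h := fun h => hc _ (le_max_right h b)
  have : Nonempty ι := ⟨b⟩
  refine ⟨⨅ h, g h, le_ciInf hgc, (tendsto_atTop_ciInf hg ⟨c, ?_⟩).congr' ?_⟩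
  · rintro _ ⟨h, rfl⟩
    exact hgc h
  · filter_upwards [eventually_ge_atTop b] with h hh
    simp only [g, max_eq_left hh]

theorem sif_asymptotic_limit_exists_general
    {K : ℕ} (T : (Fin K → ℝ) → ℝ)
    (hpos : ∀ x : Fin K → ℝ, (∀ i, 0 ≤ x i) → 0 < T x)
    (hscal : ∀ x : Fin K → ℝ, (∀ i, 0 ≤ x i) → ∀ α : ℝ, 1 < α → T (α • x) < α * T x)
    (x : Fin K → ℝ) (hx : ∀ i, 0 ≤ x i) :
    ∃ L : ℝ, 0 ≤ L ∧ Tendsto (fun h : ℝ => T (h • x) / h) atTop (nhds L) := by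
  have hsmul_nonneg : ∀ a : ℝ, 0 < a → ∀ i, 0 ≤ (a • x) i :=
    fun a ha i => mul_nonneg ha.le (hx i)
  have hanti : StrictAntiOn (fun h : ℝ => T (h • x) / h) (Ioi 0) :=
    strictAntiOn_div_self_of_lt_mul fun a ha α hα => by
      simpa only [mul_smul] using hscal (a • x) (hsmul_nonneg a ha) α hα
  refine (hanti.antitoneOn.mono (Ici_subset_Ioi.2 one_pos)).exists_tendsto_atTop_of_le ?_
  intro h (hh : 1 ≤ h)
  have h0 : 0 < h := one_pos.trans_le hh
  exact div_nonneg (hpos _ (hsmul_nonneg h h0)).le h0.le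

/-- For a standard interference function `T` (positive, monotone,
scalable on the nonnegative orthant), for every `x ≥ 0` the limit
`lim_{h→∞} T(h•x)/h` exists in `ℝ₊`. -/
theorem sif_asymptotic_limit_exists
    {K : ℕ} (T : (Fin K → ℝ) → ℝ)
    (hpos : ∀ x : Fin K → ℝ, (∀ i, 0 ≤ x i) → 0 < T x)
    (hmono : ∀ x y : Fin K → ℝ, (∀ i, 0 ≤ x i) → (∀ i, x i ≤ y i) → T x ≤ T y)
    (hscal : ∀ x : Fin K → ℝ, (∀ i, 0 ≤ x i) → ∀ α : ℝ, 1 < α → T (α • x) < α * T x)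
    (x : Fin K → ℝ) (hx : ∀ i, 0 ≤ x i) :
    ∃ L : ℝ, 0 ≤ L ∧ Tendsto (fun h : ℝ => T (h • x) / h) atTop (nhds L) :=
  sif_asymptotic_limit_exists_general T hpos hscal x hx
end

section
/- Fix positive reals r̄_k, p_k, W̄, a nonnegative matrix Ṽ ∈ ℝ_+^{K×K}, and σ̃ ∈ ℝ_{++}^K. Then each coordinate map T^{(k)}(w) = r̄_k / (W̄ · log₂(1 + p_k / [Ṽ diag(p) w + σ̃]_k)) defined on ℝ_+^K is a standard interference function: it is positive, monotone in w, and scalable (α > 1 implies α·T^{(k)}(w) > T^{(k)}(α·w)). -/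
/-!
The map is `x ↦ r / (W log₂(1 + p / x))` applied to the interference-plus-noise level
`x = [Ṽ diag(p) w]_k + σ̃_k`, which is positive and monotone in `w` and satisfies
`x(α w) < α x(w)` for `α > 1` because of the noise term. The outer map is positive and increasing
in `x`, and Bernoulli's inequality `(1 + y/α)^α > 1 + y` gives `log₂(1 + y) < α log₂(1 + y/α)`,
i.e. the outer map at `α x` is below `α` times its value at `x`.
-/

open Real

section Interference

variable {n : Type*} [Fintype n] {V : Matrix n n ℝ} {p w w' : n → ℝ} {k : n}

lemma mulVec_mul_apply_nonneg (hV : ∀ j, 0 ≤ V k j) (hp : ∀ i, 0 ≤ p i) (hw : ∀ i, 0 ≤ w i) :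
    0 ≤ V.mulVec (fun i => p i * w i) k :=
  dotProduct_nonneg_of_nonneg hV fun i => mul_nonneg (hp i) (hw i)

lemma mulVec_mul_apply_mono (hV : ∀ j, 0 ≤ V k j) (hp : ∀ i, 0 ≤ p i) (hww' : ∀ i, w i ≤ w' i) :
    V.mulVec (fun i => p i * w i) k ≤ V.mulVec (fun i => p i * w' i) k :=
  dotProduct_le_dotProduct_of_nonneg_left (fun i => mul_le_mul_of_nonneg_left (hww' i) (hp i)) hV

lemma mulVec_mul_smul_apply (α : ℝ) :
    V.mulVec (fun i => p i * (α • w) i) k = α * V.mulVec (fun i => p i * w i) k := by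
  have : (fun i => p i * (α • w) i) = α • fun i => p i * w i := by
    ext i
    simp only [Pi.smul_apply, smul_eq_mul]
    ring
  rw [this, Matrix.mulVec_smul, Pi.smul_apply, smul_eq_mul]

end Interference

lemma logb_one_add_lt_mul_logb_one_add_div {b y α : ℝ} (hb : 1 < b) (hy : 0 < y) (hα : 1 < α) :
    logb b (1 + y) < α * logb b (1 + y / α) := by
  have hα₀ : 0 < α := zero_lt_one.trans hα
  have hbernoulli : 1 + y < (1 + y / α) ^ α := by
    simpa [mul_div_cancel₀ y hα₀.ne'] using
      one_add_mul_self_lt_rpow_one_add (by linarith [div_pos hy hα₀]) (div_pos hy hα₀).ne' hα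
  calc logb b (1 + y) < logb b ((1 + y / α) ^ α) := logb_lt_logb hb (by linarith) hbernoulli
    _ = α * logb b (1 + y / α) := logb_rpow_eq_mul_logb_of_pos (by positivity)

/-- The share of the bandwidth `W` needed to carry rate `r` when the received power is `p` and
the interference-plus-noise level is `x`. -/
noncomputable def rateLoad (r W p x : ℝ) : ℝ := r / (W * logb 2 (1 + p / x))

section RateLoad

variable {r W p x y : ℝ}

lemma logb_two_one_add_div_pos (hp : 0 < p) (hx : 0 < x) : 0 < logb 2 (1 + p / x) :=
  logb_pos one_lt_two (by linarith [div_pos hp hx])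

lemma rateLoad_pos (hr : 0 < r) (hW : 0 < W) (hp : 0 < p) (hx : 0 < x) : 0 < rateLoad r W p x :=
  div_pos hr (mul_pos hW (logb_two_one_add_div_pos hp hx))

lemma rateLoad_mono (hr : 0 ≤ r) (hW : 0 < W) (hp : 0 < p) (hx : 0 < x) (hxy : x ≤ y) :
    rateLoad r W p x ≤ rateLoad r W p y := by
  have hy : 0 < y := hx.trans_le hxy
  have hlog : logb 2 (1 + p / y) ≤ logb 2 (1 + p / x) :=
    logb_le_logb_of_le one_lt_two (by linarith [div_pos hp hy])
      (by linarith [div_le_div_of_nonneg_left hp.le hx hxy])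
  exact div_le_div_of_nonneg_left hr (mul_pos hW (logb_two_one_add_div_pos hp hy))
    (mul_le_mul_of_nonneg_left hlog hW.le)

lemma rateLoad_mul_lt {α : ℝ} (hr : 0 < r) (hW : 0 < W) (hp : 0 < p) (hx : 0 < x) (hα : 1 < α) :
    rateLoad r W p (α * x) < α * rateLoad r W p x := by
  have hα₀ : 0 < α := zero_lt_one.trans hα
  have hlog : logb 2 (1 + p / x) / α < logb 2 (1 + p / (α * x)) := by
    rw [div_lt_iff₀ hα₀, mul_comm, mul_comm α x, ← div_div]
    exact logb_one_add_lt_mul_logb_one_add_div one_lt_two (div_pos hp hx) hα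
  calc rateLoad r W p (α * x) < r / (W * (logb 2 (1 + p / x) / α)) :=
        div_lt_div_of_pos_left hr
          (mul_pos hW (div_pos (logb_two_one_add_div_pos hp hx) hα₀)) (mul_lt_mul_of_pos_left hlog hW)
    _ = α * rateLoad r W p x := by
        rw [rateLoad, mul_div_assoc', div_div_eq_mul_div, mul_comm r α, mul_div_assoc]

end RateLoad

/-- The rate-demand interference map
`T^(k)(w) = r̄_k / (W̄ · log₂(1 + p_k / ([Ṽ diag(p) w]_k + σ̃_k)))`
is a standard interference function: positive, monotone and scalable on `ℝ₊^K`. -/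
theorem rate_interference_map_is_SIF
    {K : ℕ} (r : Fin K → ℝ) (p : Fin K → ℝ) (W : ℝ)
    (V : Matrix (Fin K) (Fin K) ℝ) (σ : Fin K → ℝ)
    (hr : ∀ k, 0 < r k) (hp : ∀ k, 0 < p k) (hW : 0 < W)
    (hV : ∀ i j, 0 ≤ V i j) (hσ : ∀ k, 0 < σ k) (k : Fin K) :
    let T : (Fin K → ℝ) → ℝ := fun w =>
      r k / (W * Real.logb 2 (1 + p k / (V.mulVec (fun i => p i * w i) k + σ k)))
    (∀ w : Fin K → ℝ, (∀ i, 0 ≤ w i) → 0 < T w)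
    ∧ (∀ w w' : Fin K → ℝ, (∀ i, 0 ≤ w i) → (∀ i, w i ≤ w' i) → T w ≤ T w')
    ∧ (∀ w : Fin K → ℝ, (∀ i, 0 ≤ w i) → ∀ α : ℝ, 1 < α → T (α • w) < α * T w) := by
  intro T
  have hp₀ : ∀ i, 0 ≤ p i := fun i => (hp i).le
  have hx : ∀ w : Fin K → ℝ, (∀ i, 0 ≤ w i) → 0 < V.mulVec (fun i => p i * w i) k + σ k :=
    fun w hw => add_pos_of_nonneg_of_pos (mulVec_mul_apply_nonneg (hV k) hp₀ hw) (hσ k)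
  refine ⟨fun w hw => rateLoad_pos (hr k) hW (hp k) (hx w hw), ?_, ?_⟩
  · intro w w' hw hww'
    exact rateLoad_mono (hr k).le hW (hp k) (hx w hw)
      (add_le_add_left (mulVec_mul_apply_mono (hV k) hp₀ hww') _)
  · intro w hw α hα
    have hm := mulVec_mul_apply_nonneg (hV k) hp₀ hw
    set m := V.mulVec (fun i => p i * w i) k
    have hnoise : α * m + σ k ≤ α * (m + σ k) := by nlinarith [hσ k]
    calc T (α • w) = rateLoad (r k) W (p k) (α * m + σ k) := by
          simp only [T, rateLoad, mulVec_mul_smul_apply, m]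
      _ ≤ rateLoad (r k) W (p k) (α * (m + σ k)) :=
          rateLoad_mono (hr k).le hW (hp k) (by nlinarith [hσ k]) hnoise
      _ < α * T w := rateLoad_mul_lt (hr k) hW (hp k) (hx w hw) hα
end

section
/- With T^{(k)}(w) = r̄_k / (W̄ · log₂(1 + p_k / [Ṽ diag(p) w + σ̃]_k)), the asymptotic function is T^{(k)}_∞(w) = lim_{h→∞} T^{(k)}(h·w)/h = (ln 2 · r̄_k / (W̄ · p_k)) · [Ṽ diag(p) w]_k for every w ∈ ℝ_+^K with [Ṽ diag(p) w]_k > 0. In matrix form, T_∞(w) = diag(p)^{-1} Φ Ṽ diag(p) w where Φ = (ln 2 / W̄) · diag(r̄_1,…,r̄_K). -/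
open Filter Topology

/-! For `a ≠ 0` the argument `c / (h a + b)` of the logarithm behaves like `c / (a h)`, so
`h · log (1 + c / (h a + b)) → c / a`; inverting, `T⁽ᵏ⁾(h w) / h` tends to `(ln 2 · r̄ₖ / (W̄ pₖ)) · a`
with `a = [Ṽ diag(p) w]ₖ`. -/

namespace Real

theorem tendsto_mul_div_mul_add_atTop (c : ℝ) {a : ℝ} (ha : a ≠ 0) (b : ℝ) :
    Tendsto (fun h => h * (c / (h * a + b))) atTop (𝓝 (c / a)) := by
  have hden : Tendsto (fun h => a + b / h) atTop (𝓝 a) := by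
    simpa using tendsto_const_nhds.add (tendsto_const_nhds.div_atTop (tendsto_id (α := ℝ)))
  refine (tendsto_const_nhds.div hden ha).congr' ?_
  filter_upwards [eventually_ne_atTop 0] with h hh
  rw [Pi.div_apply, show a + b / h = (h * a + b) / h by field_simp, div_div_eq_mul_div]
  ring

theorem tendsto_mul_log_one_add_div_mul_add_atTop (c : ℝ) {a : ℝ} (ha : a ≠ 0) (b : ℝ) :
    Tendsto (fun h => h * log (1 + c / (h * a + b))) atTop (𝓝 (c / a)) :=
  tendsto_mul_log_one_add_of_tendsto (tendsto_mul_div_mul_add_atTop c ha b)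

theorem tendsto_div_mul_logb_one_add_div_mul_add_div_atTop (r W : ℝ) {c a : ℝ}
    (hc : c ≠ 0) (ha : a ≠ 0) (b : ℝ) :
    Tendsto (fun h => r / (W * logb 2 (1 + c / (h * a + b))) / h) atTop
      (𝓝 (log 2 * r / (W * c) * a)) := by
  have hlim := tendsto_const_nhds (x := r * log 2 / W).div
    (tendsto_mul_log_one_add_div_mul_add_atTop c ha b) (div_ne_zero hc ha)
  convert hlim using 1
  · ext h
    rw [Pi.div_apply, logb, mul_div_assoc', div_div_eq_mul_div]
    ring
  · field_simp

end Real

namespace Matrix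

variable {n α : Type*} [Fintype n] [DecidableEq n] [Field α]

theorem inv_diagonal_of_ne_zero {p : n → α} (hp : ∀ i, p i ≠ 0) :
    (diagonal p)⁻¹ = diagonal fun i => (p i)⁻¹ := by
  refine inv_eq_right_inv ?_
  rw [diagonal_mul_diagonal, ← diagonal_one]
  exact congrArg diagonal (funext fun i => mul_inv_cancel₀ (hp i))

theorem inv_diagonal_mul_diagonal_mul_mul_diagonal_mulVec {p : n → α} (hp : ∀ i, p i ≠ 0)
    (φ : n → α) (V : Matrix n n α) (w : n → α) :
    ((diagonal p)⁻¹ * diagonal φ * V * diagonal p) *ᵥ w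
      = fun k => φ k / p k * (V *ᵥ fun i => p i * w i) k := by
  ext k
  rw [inv_diagonal_of_ne_zero hp, ← mulVec_mulVec, ← mulVec_mulVec, ← mulVec_mulVec,
    mulVec_diagonal, mulVec_diagonal, funext (mulVec_diagonal p w)]
  ring

end Matrix

theorem rate_interference_asymptotic_map_general
    {K : ℕ} (r : Fin K → ℝ) (p : Fin K → ℝ) (W : ℝ)
    (V : Matrix (Fin K) (Fin K) ℝ) (σ : Fin K → ℝ)
    (hp : ∀ k, 0 < p k) :
    (∀ k : Fin K, ∀ w : Fin K → ℝ, (∀ i, 0 ≤ w i) →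
        0 < V.mulVec (fun i => p i * w i) k →
        Tendsto
          (fun h : ℝ =>
            (r k / (W * Real.logb 2
              (1 + p k / (V.mulVec (fun i => p i * (h • w) i) k + σ k)))) / h)
          atTop
          (nhds (Real.log 2 * r k / (W * p k) * V.mulVec (fun i => p i * w i) k)))
    ∧ (∀ w : Fin K → ℝ,
        (fun k => Real.log 2 * r k / (W * p k) * V.mulVec (fun i => p i * w i) k)
          = ((Matrix.diagonal p)⁻¹ * (Matrix.diagonal fun k => Real.log 2 / W * r k)
              * V * Matrix.diagonal p).mulVec w) := by
  have hp₀ : ∀ k, p k ≠ 0 := fun k => (hp k).ne'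
  refine ⟨fun k w _ ha => ?_, fun w => ?_⟩
  · have hscale : ∀ h : ℝ, V.mulVec (fun i => p i * (h • w) i) k
        = h * V.mulVec (fun i => p i * w i) k := fun h => by
      have hsmul : (fun i => p i * (h • w) i) = h • fun i => p i * w i := by
        ext i
        simp only [Pi.smul_apply, smul_eq_mul]
        ring
      rw [hsmul, Matrix.mulVec_smul, Pi.smul_apply, smul_eq_mul]
    simp only [hscale]
    exact Real.tendsto_div_mul_logb_one_add_div_mul_add_div_atTop _ _ (hp₀ k) ha.ne' _
  · rw [Matrix.inv_diagonal_mul_diagonal_mul_mul_diagonal_mulVec hp₀]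
    ext k
    ring

/-- The asymptotic function associated with
`T^(k)(w) = r̄_k / (W̄ · log₂(1 + p_k / ([Ṽ diag(p) w]_k + σ̃_k)))` is the linear map
`T^(k)_∞(w) = (ln 2 · r̄_k / (W̄ · p_k)) · [Ṽ diag(p) w]_k`, i.e. in matrix form
`T_∞(w) = diag(p)⁻¹ Φ Ṽ diag(p) w` with `Φ = (ln 2 / W̄) diag(r̄)`. -/
theorem rate_interference_asymptotic_map
    {K : ℕ} (r : Fin K → ℝ) (p : Fin K → ℝ) (W : ℝ)
    (V : Matrix (Fin K) (Fin K) ℝ) (σ : Fin K → ℝ)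
    (hr : ∀ k, 0 < r k) (hp : ∀ k, 0 < p k) (hW : 0 < W)
    (hV : ∀ i j, 0 ≤ V i j) (hσ : ∀ k, 0 < σ k) :
    (∀ k : Fin K, ∀ w : Fin K → ℝ, (∀ i, 0 ≤ w i) →
        0 < V.mulVec (fun i => p i * w i) k →
        Tendsto
          (fun h : ℝ =>
            (r k / (W * Real.logb 2
              (1 + p k / (V.mulVec (fun i => p i * (h • w) i) k + σ k)))) / h)
          atTop
          (nhds (Real.log 2 * r k / (W * p k) * V.mulVec (fun i => p i * w i) k)))
    ∧ (∀ w : Fin K → ℝ,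
        (fun k => Real.log 2 * r k / (W * p k) * V.mulVec (fun i => p i * w i) k)
          = ((Matrix.diagonal p)⁻¹ * (Matrix.diagonal fun k => Real.log 2 / W * r k)
              * V * Matrix.diagonal p).mulVec w) :=
  rate_interference_asymptotic_map_general r p W V σ hp
end

section
/- Suppose (x*, c*) ∈ ℝ_{++}^K × ℝ_{++} satisfies T(x*) = (1/c*)·x* and ‖x*‖ = θ, where T = (T^{(1)},…,T^{(K)}) is a vector of standard interference functions and ‖·‖ is a monotone norm. Define utilities u_k(x) = x_k / T^{(k)}(x). Then x* is a solution of max_{x ≥ 0, ‖x‖ ≤ θ} min_k u_k(x), and u_k(x*) = c* for every k. -/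
/-!
Compare a feasible `x` with `x*` along the user `k` minimising `x k / x* k`, and put
`t = x k / x* k`, so that `t • x* ≤ x` with equality at `k`. The budget and the monotonicity of
the norm give `t ≤ 1`, and scalability (read as `t · T(x*) ≤ T(t • x*)` for `t ≤ 1`) together with
monotonicity of `T` give `t · T⁽ᵏ⁾(x*) ≤ T⁽ᵏ⁾(x)`. Hence `u_k(x) ≤ u_k(x*) = c*`.
-/

section InterferenceFunction

variable {ι : Type*} {T : (ι → ℝ) → (ι → ℝ)}

theorem mul_apply_le_apply_smul_of_le_one {k : ι}
    (hTscal : ∀ x : ι → ℝ, (∀ i, 0 ≤ x i) → ∀ α : ℝ, 1 < α → T (α • x) k < α * T x k)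
    {x : ι → ℝ} (hx : ∀ i, 0 ≤ x i) {t : ℝ} (ht₀ : 0 < t) (ht₁ : t ≤ 1) :
    t * T x k ≤ T (t • x) k := by
  rcases ht₁.eq_or_lt with rfl | ht₁
  · simp
  have hscal := hTscal (t • x) (fun i => mul_nonneg ht₀.le (hx i)) t⁻¹ (one_lt_inv₀ ht₀ |>.mpr ht₁)
  rw [inv_smul_smul₀ ht₀.ne'] at hscal
  exact (le_inv_mul_iff₀ ht₀).mp hscal.le

theorem le_one_of_smul_le_of_norm_le {n : (ι → ℝ) → ℝ}
    (hnhom : ∀ (c : ℝ) (x), n (c • x) = |c| * n x)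
    (hnmono : ∀ x y : ι → ℝ, (∀ i, 0 ≤ x i) → (∀ i, x i ≤ y i) → n x ≤ n y)
    {x y : ι → ℝ} (hy : ∀ i, 0 ≤ y i) (hny : 0 < n y) (hnx : n x ≤ n y)
    {t : ℝ} (ht : 0 ≤ t) (hty : ∀ i, t * y i ≤ x i) : t ≤ 1 := by
  have : t * n y ≤ n y :=
    calc t * n y = n (t • y) := by rw [hnhom, abs_of_nonneg ht]
      _ ≤ n x := hnmono _ _ (fun i => mul_nonneg ht (hy i)) hty
      _ ≤ n y := hnx
  exact (mul_le_iff_le_one_left hny).mp this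

theorem exists_div_apply_le_div_apply_of_norm_le [Finite ι] [Nonempty ι]
    (hTmono : ∀ k, ∀ x y : ι → ℝ, (∀ i, 0 ≤ x i) → (∀ i, x i ≤ y i) → T x k ≤ T y k)
    (hTscal : ∀ k, ∀ x : ι → ℝ, (∀ i, 0 ≤ x i) → ∀ α : ℝ, 1 < α →
      T (α • x) k < α * T x k)
    {n : (ι → ℝ) → ℝ} (hnhom : ∀ (c : ℝ) (x), n (c • x) = |c| * n x)
    (hnmono : ∀ x y : ι → ℝ, (∀ i, 0 ≤ x i) → (∀ i, x i ≤ y i) → n x ≤ n y)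
    {x y : ι → ℝ} (hx : ∀ i, 0 ≤ x i) (hy : ∀ i, 0 < y i) (hTy : ∀ k, 0 < T y k)
    (hny : 0 < n y) (hnx : n x ≤ n y) :
    ∃ k, x k / T x k ≤ y k / T y k := by
  obtain ⟨k, hk⟩ := Finite.exists_min fun i => x i / y i
  refine ⟨k, ?_⟩
  set t := x k / y k
  have hxk : x k = t * y k := (div_mul_cancel₀ _ (hy k).ne').symm
  have hty : ∀ i, t * y i ≤ x i := fun i => (le_div_iff₀ (hy i)).mp (hk i)
  have ht : 0 ≤ t := div_nonneg (hx k) (hy k).le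
  rcases ht.eq_or_lt with ht₀ | ht₀
  · rw [hxk, ← ht₀, zero_mul, zero_div]
    exact div_nonneg (hy k).le (hTy k).le
  have ht₁ : t ≤ 1 := le_one_of_smul_le_of_norm_le hnhom hnmono (fun i => (hy i).le) hny hnx
    ht₀.le hty
  have hTx : t * T y k ≤ T x k :=
    (mul_apply_le_apply_smul_of_le_one (hTscal k) (fun i => (hy i).le) ht₀ ht₁).trans
      (hTmono k _ _ (fun i => mul_nonneg ht₀.le (hy i).le) hty)
  calc x k / T x k ≤ x k / (t * T y k) :=
        div_le_div_of_nonneg_left (hx k) (mul_pos ht₀ (hTy k)) hTx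
    _ = y k / T y k := by rw [hxk, mul_div_mul_left _ _ ht₀.ne']

end InterferenceFunction

theorem cevp_solution_solves_maxmin_general
    {K : ℕ} (hK : 0 < K)
    (T : (Fin K → ℝ) → (Fin K → ℝ))
    (hTmono : ∀ k, ∀ x y : Fin K → ℝ, (∀ i, 0 ≤ x i) → (∀ i, x i ≤ y i) → T x k ≤ T y k)
    (hTscal : ∀ k, ∀ x : Fin K → ℝ, (∀ i, 0 ≤ x i) → ∀ α : ℝ, 1 < α →
      T (α • x) k < α * T x k)
    (n : (Fin K → ℝ) → ℝ)
    (hnhom : ∀ (c : ℝ) (x), n (c • x) = |c| * n x)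
    (hnmono : ∀ x y : Fin K → ℝ, (∀ i, 0 ≤ x i) → (∀ i, x i ≤ y i) → n x ≤ n y)
    (θ : ℝ) (hθ : 0 < θ)
    (xs : Fin K → ℝ) (cs : ℝ) (hxs : ∀ i, 0 < xs i) (hcs : 0 < cs)
    (hfix : T xs = (1 / cs) • xs) (hbudget : n xs = θ) :
    (∀ k, xs k / T xs k = cs) ∧
      ∀ x : Fin K → ℝ, (∀ i, 0 ≤ x i) → n x ≤ θ →
        (⨅ k : Fin K, x k / T x k) ≤ ⨅ k : Fin K, xs k / T xs k := by
  have hTxs : ∀ k, T xs k = (1 / cs) * xs k := fun k => congrFun hfix k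
  have hu : ∀ k, xs k / T xs k = cs := fun k => by
    rw [hTxs]; field_simp [(hxs k).ne']
  refine ⟨hu, fun x hx hnx => ?_⟩
  have : Nonempty (Fin K) := ⟨⟨0, hK⟩⟩
  obtain ⟨k, hk⟩ := exists_div_apply_le_div_apply_of_norm_le hTmono hTscal hnhom hnmono hx hxs
    (fun k => by rw [hTxs]; exact mul_pos (one_div_pos.mpr hcs) (hxs k)) (hbudget ▸ hθ)
    (hbudget ▸ hnx)
  calc (⨅ k, x k / T x k) ≤ x k / T x k := ciInf_le (Set.finite_range _).bddBelow k
    _ ≤ xs k / T xs k := hk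
    _ = ⨅ k, xs k / T xs k := by simp only [hu, ciInf_const]

/-- If `(x*, c*)` solves the conditional eigenvalue problem
`T(x*) = (1/c*)·x*`, `‖x*‖ = θ`, where `T` is a vector of SIFs and `‖·‖ = n` is a
monotone norm, then `x*` maximizes `min_k u_k(x) = min_k x_k / T^(k)(x)` over
`{x ≥ 0 : ‖x‖ ≤ θ}`, and all utilities equal `c*` at `x*`. -/
theorem cevp_solution_solves_maxmin
    {K : ℕ} (hK : 0 < K)
    (T : (Fin K → ℝ) → (Fin K → ℝ))
    (hTpos : ∀ k, ∀ x : Fin K → ℝ, (∀ i, 0 ≤ x i) → 0 < T x k)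
    (hTmono : ∀ k, ∀ x y : Fin K → ℝ, (∀ i, 0 ≤ x i) → (∀ i, x i ≤ y i) → T x k ≤ T y k)
    (hTscal : ∀ k, ∀ x : Fin K → ℝ, (∀ i, 0 ≤ x i) → ∀ α : ℝ, 1 < α →
      T (α • x) k < α * T x k)
    (n : (Fin K → ℝ) → ℝ)
    (hn0 : ∀ x, n x = 0 ↔ x = 0)
    (hnhom : ∀ (c : ℝ) (x), n (c • x) = |c| * n x)
    (hntri : ∀ x y, n (x + y) ≤ n x + n y)
    (hnmono : ∀ x y : Fin K → ℝ, (∀ i, 0 ≤ x i) → (∀ i, x i ≤ y i) → n x ≤ n y)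
    (θ : ℝ) (hθ : 0 < θ)
    (xs : Fin K → ℝ) (cs : ℝ) (hxs : ∀ i, 0 < xs i) (hcs : 0 < cs)
    (hfix : T xs = (1 / cs) • xs) (hbudget : n xs = θ) :
    (∀ k, xs k / T xs k = cs) ∧
      ∀ x : Fin K → ℝ, (∀ i, 0 ≤ x i) → n x ≤ θ →
        (⨅ k : Fin K, x k / T x k) ≤ ⨅ k : Fin K, xs k / T xs k :=
  cevp_solution_solves_maxmin_general hK T hTmono hTscal n hnhom hnmono θ hθ xs cs hxs hcs hfix
    hbudget
end

section
/- Let T = (T^{(1)},…,T^{(K)}) be a vector of standard interference functions, ‖·‖ a monotone norm, and for each θ > 0 let (x_θ, c_θ) be the unique solution of T(x_θ) = (1/c_θ)·x_θ with ‖x_θ‖ = θ. Then the utility function U(θ) := c_θ is nondecreasing in θ. -/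
/-!
Compare the two eigenvectors through the largest ratio `λ = max_i x_{θ₂,i} / x_{θ₁,i}`.
If `λ ≤ 1` then `x_{θ₂} ≤ x_{θ₁}`, so monotonicity of the norm forces `θ₁ = θ₂`. Otherwise,
at an index `k` attaining the maximum, `x_{θ₂} ≤ λ x_{θ₁}` with equality in coordinate `k`, and
monotonicity followed by strict scalability of `T` give
`x_{θ₂,k} / c_{θ₂} = T(x_{θ₂})_k ≤ T(λ x_{θ₁})_k < λ T(x_{θ₁})_k = x_{θ₂,k} / c_{θ₁}`.
-/

theorem exists_forall_le_div_mul {ι : Type*} [Finite ι] [Nonempty ι] {x : ι → ℝ}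
    (hx : ∀ i, 0 < x i) (y : ι → ℝ) : ∃ k, ∀ i, y i ≤ y k / x k * x i := by
  obtain ⟨k, hk⟩ := Finite.exists_max fun i => y i / x i
  exact ⟨k, fun i => (div_le_iff₀ (hx i)).1 (hk i)⟩

theorem eigenvalue_lt_of_not_le {ι : Type*} [Finite ι] {T : (ι → ℝ) → (ι → ℝ)}
    (hTmono : ∀ k, ∀ x y : ι → ℝ, (∀ i, 0 ≤ x i) → (∀ i, x i ≤ y i) → T x k ≤ T y k)
    (hTscal : ∀ k, ∀ x : ι → ℝ, (∀ i, 0 ≤ x i) → ∀ α : ℝ, 1 < α → T (α • x) k < α * T x k)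
    {x y : ι → ℝ} {a b : ℝ} (hx : ∀ i, 0 < x i) (hy : ∀ i, 0 < y i)
    (hTx : T x = a • x) (hTy : T y = b • y) (hyx : ¬ ∀ i, y i ≤ x i) : b < a := by
  obtain ⟨j, hj⟩ := not_forall.1 hyx
  replace hj := not_le.1 hj
  have : Nonempty ι := ⟨j⟩
  obtain ⟨k, hk⟩ := exists_forall_le_div_mul hx y
  set lam := y k / x k
  have hlam : 1 < lam := by
    have : 1 * x j < lam * x j := by linarith [hk j]
    exact lt_of_mul_lt_mul_right this (hx j).le
  have hyk : y k = lam * x k := (div_mul_cancel₀ _ (hx k).ne').symm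
  have hlt : b * y k < a * y k :=
    calc b * y k = T y k := by rw [hTy]; rfl
      _ ≤ T (lam • x) k := hTmono k y _ (fun i => (hy i).le) hk
      _ < lam * T x k := hTscal k x (fun i => (hx i).le) lam hlam
      _ = a * y k := by rw [hTx, hyk, Pi.smul_apply, smul_eq_mul]; ring
  exact lt_of_mul_lt_mul_right hlt (hy k).le

theorem cevp_utility_monotone_general
    {K : ℕ}
    (T : (Fin K → ℝ) → (Fin K → ℝ))
    (hTmono : ∀ k, ∀ x y : Fin K → ℝ, (∀ i, 0 ≤ x i) → (∀ i, x i ≤ y i) → T x k ≤ T y k)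
    (hTscal : ∀ k, ∀ x : Fin K → ℝ, (∀ i, 0 ≤ x i) → ∀ α : ℝ, 1 < α →
      T (α • x) k < α * T x k)
    (n : (Fin K → ℝ) → ℝ)
    (hnmono : ∀ x y : Fin K → ℝ, (∀ i, 0 ≤ x i) → (∀ i, x i ≤ y i) → n x ≤ n y)
    (x_ : ℝ → (Fin K → ℝ)) (c_ : ℝ → ℝ)
    (hxpos : ∀ θ : ℝ, 0 < θ → ∀ i, 0 < x_ θ i)
    (hcpos : ∀ θ : ℝ, 0 < θ → 0 < c_ θ)
    (hfix : ∀ θ : ℝ, 0 < θ → T (x_ θ) = (1 / c_ θ) • x_ θ)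
    (hbudget : ∀ θ : ℝ, 0 < θ → n (x_ θ) = θ) :
    ∀ θ₁ θ₂ : ℝ, 0 < θ₁ → θ₁ ≤ θ₂ → c_ θ₁ ≤ c_ θ₂ := by
  intro θ₁ θ₂ h₁ h₁₂
  have h₂ := h₁.trans_le h₁₂
  by_cases hle : ∀ i, x_ θ₂ i ≤ x_ θ₁ i
  · have h₂₁ : θ₂ ≤ θ₁ := by
      simpa only [hbudget _ h₁, hbudget _ h₂] using
        hnmono _ _ (fun i => (hxpos θ₂ h₂ i).le) hle
    rw [le_antisymm h₁₂ h₂₁]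
  · have hinv := eigenvalue_lt_of_not_le hTmono hTscal (hxpos θ₁ h₁) (hxpos θ₂ h₂)
      (hfix θ₁ h₁) (hfix θ₂ h₂) hle
    exact ((one_div_lt_one_div (hcpos _ h₂) (hcpos _ h₁)).1 hinv).le

/-- For the conditional eigenvalue problem associated with a vector
`T` of SIFs and a monotone norm `n`, the optimal utility `U(θ) = c_θ` is a
nondecreasing function of the budget `θ`. -/
theorem cevp_utility_monotone
    {K : ℕ}
    (T : (Fin K → ℝ) → (Fin K → ℝ))
    (hTpos : ∀ k, ∀ x : Fin K → ℝ, (∀ i, 0 ≤ x i) → 0 < T x k)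
    (hTmono : ∀ k, ∀ x y : Fin K → ℝ, (∀ i, 0 ≤ x i) → (∀ i, x i ≤ y i) → T x k ≤ T y k)
    (hTscal : ∀ k, ∀ x : Fin K → ℝ, (∀ i, 0 ≤ x i) → ∀ α : ℝ, 1 < α →
      T (α • x) k < α * T x k)
    (n : (Fin K → ℝ) → ℝ)
    (hn0 : ∀ x, n x = 0 ↔ x = 0)
    (hnhom : ∀ (c : ℝ) (x), n (c • x) = |c| * n x)
    (hntri : ∀ x y, n (x + y) ≤ n x + n y)
    (hnmono : ∀ x y : Fin K → ℝ, (∀ i, 0 ≤ x i) → (∀ i, x i ≤ y i) → n x ≤ n y)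
    (x_ : ℝ → (Fin K → ℝ)) (c_ : ℝ → ℝ)
    (hxpos : ∀ θ : ℝ, 0 < θ → ∀ i, 0 < x_ θ i)
    (hcpos : ∀ θ : ℝ, 0 < θ → 0 < c_ θ)
    (hfix : ∀ θ : ℝ, 0 < θ → T (x_ θ) = (1 / c_ θ) • x_ θ)
    (hbudget : ∀ θ : ℝ, 0 < θ → n (x_ θ) = θ)
    (huniq : ∀ θ : ℝ, 0 < θ → ∀ (y : Fin K → ℝ) (d : ℝ), (∀ i, 0 < y i) → 0 < d →
      T y = (1 / d) • y → n y = θ → y = x_ θ ∧ d = c_ θ) :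
    ∀ θ₁ θ₂ : ℝ, 0 < θ₁ → θ₁ ≤ θ₂ → c_ θ₁ ≤ c_ θ₂ :=
  cevp_utility_monotone_general T hTmono hTscal n hnmono x_ c_ hxpos hcpos hfix hbudget
end

section
/- Under the assumptions of the conditional eigenvalue problem, if the asymptotic CEVP T_∞(x_∞) = λ_∞·x_∞, ‖x_∞‖ = 1 has a unique positive solution (x_∞, λ_∞), then sup_{θ>0} U(θ) = lim_{θ→∞} U(θ) = 1/λ_∞; that is, the optimal max-min utility is bounded above by 1/λ_∞ for every finite budget and approaches this bound as the budget tends to infinity. -/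
/-!
Both bounds are Collatz–Wielandt arguments against the positive asymptotic eigenvector `x∞`.
Strict subhomogeneity makes `h ↦ T (h • x) k / h` antitone, so it decreases to `T∞ x k`.
If `m` is the least ratio `x_θ k / x∞ k`, then `m • x∞ ≤ x_θ` with equality at some `k`, and
monotonicity gives `λ∞ ≤ 1 / c_θ`. If `M` is the largest ratio, then `x_θ ≤ M • x∞` with
equality at some `k`; the monotone norm forces `θ ≤ M`, hence
`1 / c_θ ≤ T (θ • x∞) k / θ / x∞ k`, and the right-hand side tends to `λ∞` as `θ → ∞`.
-/

open Filter Topology Set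

section Subhomogeneous

variable {ι : Type*} {T : (ι → ℝ) → ι → ℝ}

theorem antitoneOn_apply_smul_div
    (hTscal : ∀ k, ∀ x : ι → ℝ, 0 ≤ x → ∀ α : ℝ, 1 < α → T (α • x) k < α * T x k)
    {x : ι → ℝ} (hx : 0 ≤ x) (k : ι) :
    AntitoneOn (fun h : ℝ => T (h • x) k / h) (Ioi 0) := by
  intro u (hu : 0 < u) v (hv : 0 < v) huv
  rcases huv.eq_or_lt with rfl | huv
  · rfl
  have h := hTscal k (u • x) (smul_nonneg hu.le hx) (v / u) ((one_lt_div hu).2 huv)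
  rw [smul_smul, div_mul_cancel₀ _ hu.ne'] at h
  rw [div_le_div_iff₀ hv hu]
  calc T (v • x) k * u ≤ v / u * T (u • x) k * u := by gcongr
    _ = T (u • x) k * v := by field_simp

theorem le_apply_smul_div_of_tendsto
    (hTscal : ∀ k, ∀ x : ι → ℝ, 0 ≤ x → ∀ α : ℝ, 1 < α → T (α • x) k < α * T x k)
    {x : ι → ℝ} (hx : 0 ≤ x) {k : ι} {L : ℝ}
    (hL : Tendsto (fun h : ℝ => T (h • x) k / h) atTop (𝓝 L)) {u : ℝ} (hu : 0 < u) :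
    L ≤ T (u • x) k / u :=
  le_of_tendsto hL <| (eventually_ge_atTop u).mono fun _ h =>
    antitoneOn_apply_smul_div hTscal hx k hu (hu.trans_le h) h

variable [Finite ι] [Nonempty ι]
  (hTmono : ∀ k, ∀ x y : ι → ℝ, 0 ≤ x → x ≤ y → T x k ≤ T y k)
  (hTscal : ∀ k, ∀ x : ι → ℝ, 0 ≤ x → ∀ α : ℝ, 1 < α → T (α • x) k < α * T x k)
include hTmono hTscal

theorem asymptotic_eigenvalue_le_eigenvalue {x y : ι → ℝ} {lam r : ℝ}
    (hx : ∀ i, 0 < x i) (hlim : ∀ k, Tendsto (fun h : ℝ => T (h • x) k / h) atTop (𝓝 (lam * x k)))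
    (hy : ∀ i, 0 < y i) (hTy : T y = r • y) :
    lam ≤ r := by
  obtain ⟨k, hk⟩ := Finite.exists_min fun i => y i / x i
  set m := y k / x k
  have hm : 0 < m := div_pos (hy k) (hx k)
  have hmx : m • x ≤ y := fun i => (le_div_iff₀ (hx i)).1 (hk i)
  have hyk : y k = m * x k := (div_mul_cancel₀ _ (hx k).ne').symm
  refine le_of_mul_le_mul_right ?_ (hx k)
  calc lam * x k ≤ T (m • x) k / m :=
        le_apply_smul_div_of_tendsto hTscal (fun i => (hx i).le) (hlim k) hm
    _ ≤ T y k / m := by gcongr; exact hTmono k _ _ (smul_nonneg hm.le fun i => (hx i).le) hmx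
    _ = r * x k := by rw [hTy, Pi.smul_apply, smul_eq_mul, hyk]; field_simp

theorem exists_eigenvalue_le_apply_smul_div {n : (ι → ℝ) → ℝ}
    (hnhom : ∀ (c : ℝ) x, n (c • x) = |c| * n x)
    (hnmono : ∀ x y : ι → ℝ, 0 ≤ x → x ≤ y → n x ≤ n y)
    {x y : ι → ℝ} {r θ : ℝ} (hx : ∀ i, 0 < x i) (hnx : n x = 1)
    (hy : 0 ≤ y) (hTy : T y = r • y) (hθ : 0 < θ) (hny : n y = θ) :
    ∃ k, r ≤ T (θ • x) k / θ / x k := by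
  obtain ⟨k, hk⟩ := Finite.exists_max fun i => y i / x i
  set M := y k / x k
  have hyM : y ≤ M • x := fun i => (div_le_iff₀ (hx i)).1 (hk i)
  have hyk : y k = M * x k := (div_mul_cancel₀ _ (hx k).ne').symm
  have hθM : θ ≤ M := calc
    θ = n y := hny.symm
    _ ≤ n (M • x) := hnmono _ _ hy hyM
    _ = M := by rw [hnhom, hnx, mul_one, abs_of_nonneg (div_nonneg (hy k) (hx k).le)]
  have hM : 0 < M := hθ.trans_le hθM
  refine ⟨k, (le_div_iff₀ (hx k)).2 ?_⟩
  calc r * x k = T y k / M := by rw [hTy, Pi.smul_apply, smul_eq_mul, hyk]; field_simp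
    _ ≤ T (M • x) k / M := by gcongr; exact hTmono k _ _ hy hyM
    _ ≤ T (θ • x) k / θ :=
        antitoneOn_apply_smul_div hTscal (fun i => (hx i).le) k hθ hM hθM

end Subhomogeneous

theorem tendsto_of_le_of_exists_le_of_tendsto {α ι β : Type*} [Finite ι] [LinearOrder β]
    [TopologicalSpace β] [OrderTopology β] {l : Filter α} {f : α → β} {g : ι → α → β} {a : β}
    (hle : ∀ᶠ t in l, a ≤ f t) (hge : ∀ᶠ t in l, ∃ i, f t ≤ g i t)
    (hg : ∀ i, Tendsto (g i) l (𝓝 a)) :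
    Tendsto f l (𝓝 a) := by
  refine tendsto_order.2 ⟨fun b hb => hle.mono fun t ht => hb.trans_le ht, fun b hb => ?_⟩
  filter_upwards [hge, eventually_all.2 fun i => (hg i).eventually (gt_mem_nhds hb)]
    with t ⟨i, hi⟩ hlt
  exact hi.trans_lt (hlt i)

theorem ciSup_Ioi_eq_of_forall_le_of_tendsto {β : Type*} [ConditionallyCompleteLinearOrder β]
    [TopologicalSpace β] [OrderTopology β] {f : ℝ → β} {a : β} {t₀ : ℝ}
    (hle : ∀ t, t₀ < t → f t ≤ a) (hf : Tendsto f atTop (𝓝 a)) :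
    ⨆ t : Ioi t₀, f t = a := by
  have hbdd : BddAbove (range fun t : Ioi t₀ => f t) := ⟨a, forall_mem_range.2 fun t => hle t t.2⟩
  refine le_antisymm (ciSup_le fun t => hle t t.2) (le_of_tendsto hf ?_)
  exact (eventually_gt_atTop t₀).mono fun t ht =>
    le_ciSup (f := fun t : Ioi t₀ => f t) hbdd ⟨t, ht⟩

theorem cevp_utility_asymptotic_limit_general
    {K : ℕ}
    (T : (Fin K → ℝ) → (Fin K → ℝ))
    (hTmono : ∀ k, ∀ x y : Fin K → ℝ, (∀ i, 0 ≤ x i) → (∀ i, x i ≤ y i) → T x k ≤ T y k)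
    (hTscal : ∀ k, ∀ x : Fin K → ℝ, (∀ i, 0 ≤ x i) → ∀ α : ℝ, 1 < α →
      T (α • x) k < α * T x k)
    (n : (Fin K → ℝ) → ℝ)
    (hnhom : ∀ (c : ℝ) (x), n (c • x) = |c| * n x)
    (hnmono : ∀ x y : Fin K → ℝ, (∀ i, 0 ≤ x i) → (∀ i, x i ≤ y i) → n x ≤ n y)
    (x_ : ℝ → (Fin K → ℝ)) (c_ : ℝ → ℝ)
    (hxpos : ∀ θ : ℝ, 0 < θ → ∀ i, 0 < x_ θ i)
    (hcpos : ∀ θ : ℝ, 0 < θ → 0 < c_ θ)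
    (hfix : ∀ θ : ℝ, 0 < θ → T (x_ θ) = (1 / c_ θ) • x_ θ)
    (hbudget : ∀ θ : ℝ, 0 < θ → n (x_ θ) = θ)
    (Tinf : (Fin K → ℝ) → (Fin K → ℝ))
    (hTinf : ∀ (k : Fin K) (x : Fin K → ℝ), (∀ i, 0 ≤ x i) →
      Tendsto (fun h : ℝ => T (h • x) k / h) atTop (nhds (Tinf x k)))
    (xinf : Fin K → ℝ) (laminf : ℝ)
    (hxinf : ∀ i, 0 < xinf i) (hlaminf : 0 < laminf)
    (hasymfix : Tinf xinf = laminf • xinf) (hasymnorm : n xinf = 1) :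
    (∀ θ : ℝ, 0 < θ → c_ θ ≤ 1 / laminf)
    ∧ (⨆ θ : Set.Ioi (0 : ℝ), c_ θ) = 1 / laminf
    ∧ Tendsto (fun θ : ℝ => c_ θ) atTop (nhds (1 / laminf)) := by
  have : Nonempty (Fin K) := not_isEmpty_iff.1 fun _ => by
    simpa [Subsingleton.elim (0 : Fin K → ℝ) xinf, hasymnorm] using hnhom 0 xinf
  have hlim : ∀ k, Tendsto (fun h : ℝ => T (h • xinf) k / h) atTop (𝓝 (laminf * xinf k)) :=
    fun k => by simpa [hasymfix] using hTinf k xinf fun i => (hxinf i).le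
  have hlow : ∀ θ, 0 < θ → laminf ≤ 1 / c_ θ := fun θ hθ =>
    asymptotic_eigenvalue_le_eigenvalue hTmono hTscal hxinf hlim (hxpos θ hθ) (hfix θ hθ)
  have hup : ∀ θ, 0 < θ → ∃ k, 1 / c_ θ ≤ T (θ • xinf) k / θ / xinf k := fun θ hθ =>
    exists_eigenvalue_le_apply_smul_div hTmono hTscal hnhom hnmono hxinf hasymnorm
      (fun i => (hxpos θ hθ i).le) (hfix θ hθ) hθ (hbudget θ hθ)
  have hinv : Tendsto (fun θ => 1 / c_ θ) atTop (𝓝 laminf) :=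
    tendsto_of_le_of_exists_le_of_tendsto
      ((eventually_gt_atTop 0).mono hlow) ((eventually_gt_atTop 0).mono hup)
      fun k => by simpa [mul_div_assoc, (hxinf k).ne'] using (hlim k).div_const (xinf k)
  have hbound : ∀ θ, 0 < θ → c_ θ ≤ 1 / laminf := fun θ hθ =>
    (le_one_div (hcpos θ hθ) hlaminf).2 (hlow θ hθ)
  have hc : Tendsto c_ atTop (𝓝 (1 / laminf)) := by simpa using hinv.inv₀ hlaminf.ne'
  exact ⟨hbound, ciSup_Ioi_eq_of_forall_le_of_tendsto hbound hc, hc⟩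

/-- If the asymptotic CEVP `T_∞(x_∞) = λ_∞ x_∞`, `‖x_∞‖ = 1` has a
unique positive solution, then `sup_{θ>0} U(θ) = lim_{θ→∞} U(θ) = 1/λ_∞`: the
optimal utility is bounded by `1/λ_∞` for every budget and attains this bound
asymptotically. -/
theorem cevp_utility_asymptotic_limit
    {K : ℕ}
    (T : (Fin K → ℝ) → (Fin K → ℝ))
    (hTpos : ∀ k, ∀ x : Fin K → ℝ, (∀ i, 0 ≤ x i) → 0 < T x k)
    (hTmono : ∀ k, ∀ x y : Fin K → ℝ, (∀ i, 0 ≤ x i) → (∀ i, x i ≤ y i) → T x k ≤ T y k)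
    (hTscal : ∀ k, ∀ x : Fin K → ℝ, (∀ i, 0 ≤ x i) → ∀ α : ℝ, 1 < α →
      T (α • x) k < α * T x k)
    (n : (Fin K → ℝ) → ℝ)
    (hn0 : ∀ x, n x = 0 ↔ x = 0)
    (hnhom : ∀ (c : ℝ) (x), n (c • x) = |c| * n x)
    (hntri : ∀ x y, n (x + y) ≤ n x + n y)
    (hnmono : ∀ x y : Fin K → ℝ, (∀ i, 0 ≤ x i) → (∀ i, x i ≤ y i) → n x ≤ n y)
    (x_ : ℝ → (Fin K → ℝ)) (c_ : ℝ → ℝ)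
    (hxpos : ∀ θ : ℝ, 0 < θ → ∀ i, 0 < x_ θ i)
    (hcpos : ∀ θ : ℝ, 0 < θ → 0 < c_ θ)
    (hfix : ∀ θ : ℝ, 0 < θ → T (x_ θ) = (1 / c_ θ) • x_ θ)
    (hbudget : ∀ θ : ℝ, 0 < θ → n (x_ θ) = θ)
    (huniq : ∀ θ : ℝ, 0 < θ → ∀ (y : Fin K → ℝ) (d : ℝ), (∀ i, 0 < y i) → 0 < d →
      T y = (1 / d) • y → n y = θ → y = x_ θ ∧ d = c_ θ)
    (Tinf : (Fin K → ℝ) → (Fin K → ℝ))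
    (hTinf : ∀ (k : Fin K) (x : Fin K → ℝ), (∀ i, 0 ≤ x i) →
      Tendsto (fun h : ℝ => T (h • x) k / h) atTop (nhds (Tinf x k)))
    (xinf : Fin K → ℝ) (laminf : ℝ)
    (hxinf : ∀ i, 0 < xinf i) (hlaminf : 0 < laminf)
    (hasymfix : Tinf xinf = laminf • xinf) (hasymnorm : n xinf = 1)
    (hasymuniq : ∀ (y : Fin K → ℝ) (μ : ℝ), (∀ i, 0 < y i) → 0 < μ →
      Tinf y = μ • y → n y = 1 → y = xinf ∧ μ = laminf) :
    (∀ θ : ℝ, 0 < θ → c_ θ ≤ 1 / laminf)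
    ∧ (⨆ θ : Set.Ioi (0 : ℝ), c_ θ) = 1 / laminf
    ∧ Tendsto (fun θ : ℝ => c_ θ) atTop (nhds (1 / laminf)) :=
  cevp_utility_asymptotic_limit_general T hTmono hTscal n hnhom hnmono x_ c_ hxpos hcpos hfix
    hbudget Tinf hTinf xinf laminf hxinf hlaminf hasymfix hasymnorm
end

section
/- Under the CEVP assumptions, the resource efficiency E(θ) = U(θ)/θ satisfies E(θ) ≤ min{1/‖T(0)‖, 1/(λ_∞·θ)} for all θ > 0. -/
/-!
Write `T x_θ = x_θ / c_θ` with `‖x_θ‖ = θ`.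

* Monotonicity of `T` and of the norm give `‖T 0‖ ≤ ‖T x_θ‖ = θ / c_θ`.
* Scale `x_∞` down until it touches `x_θ` from below: `t • x_∞ ≤ x_θ` with equality in a
  coordinate `i`. By monotonicity and subhomogeneity `T (h • t • x_∞) i / h ≤ T x_θ i = t x_∞ i / c_θ`
  for `h > 1`; as `h → ∞` the left side tends to `t λ_∞ x_∞ i`, so `λ_∞ ≤ 1 / c_θ`.
-/

open Filter Topology

variable {ι : Type*}

theorem exists_pos_mul_le_and_eq_mul [Fintype ι] [Nonempty ι] {x y : ι → ℝ}
    (hx : ∀ i, 0 < x i) (hy : ∀ i, 0 < y i) :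
    ∃ t, 0 < t ∧ (∀ i, t * y i ≤ x i) ∧ ∃ i, x i = t * y i := by
  obtain ⟨i₀, -, hmin⟩ := Finset.univ.exists_min_image (fun i => x i / y i) Finset.univ_nonempty
  refine ⟨x i₀ / y i₀, div_pos (hx i₀) (hy i₀), fun i => ?_, i₀, (div_mul_cancel₀ _ (hy i₀).ne').symm⟩
  exact (le_div_iff₀ (hy i)).mp (hmin i (Finset.mem_univ i))

theorem Filter.Tendsto.comp_mul_const_div {f : ℝ → ℝ} {L t : ℝ}
    (hf : Tendsto (fun h => f h / h) atTop (𝓝 L)) (ht : 0 < t) :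
    Tendsto (fun h => f (h * t) / h) atTop (𝓝 (t * L)) := by
  refine ((hf.comp (tendsto_id.atTop_mul_const ht)).const_mul t).congr' ?_
  filter_upwards [eventually_gt_atTop 0] with h hh
  simp only [Function.comp_apply, id]
  field_simp

section MonotoneNorm

variable (n : (ι → ℝ) → ℝ)
  (hnhom : ∀ (c : ℝ) (x), n (c • x) = |c| * n x)
  (hnmono : ∀ x y : ι → ℝ, (∀ i, 0 ≤ x i) → (∀ i, x i ≤ y i) → n x ≤ n y)
include hnhom

theorem nonempty_of_apply_ne_zero {x : ι → ℝ} (hx : n x ≠ 0) : Nonempty ι := by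
  by_contra hι
  have : IsEmpty ι := not_nonempty_iff.mp hι
  refine hx ?_
  rw [Subsingleton.elim x ((0 : ℝ) • x), hnhom, abs_zero, zero_mul]

include hnmono

theorem apply_pos_of_mul_le {x v : ι → ℝ} {t : ℝ} (ht : 0 < t) (hx : ∀ i, 0 ≤ x i)
    (hle : ∀ i, t * x i ≤ v i) (hnx : 0 < n x) : 0 < n v :=
  calc 0 < t * n x := mul_pos ht hnx
    _ = n (t • x) := by rw [hnhom, abs_of_pos ht]
    _ ≤ n v := hnmono _ _ (fun i => mul_nonneg ht.le (hx i)) hle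

end MonotoneNorm

section Subhomogeneous

variable (T : (ι → ℝ) → (ι → ℝ))
  (hTmono : ∀ k, ∀ x y : ι → ℝ, (∀ i, 0 ≤ x i) → (∀ i, x i ≤ y i) → T x k ≤ T y k)
  (hTsub : ∀ k, ∀ x : ι → ℝ, (∀ i, 0 ≤ x i) → ∀ α : ℝ, 1 < α → T (α • x) k ≤ α * T x k)
include hTmono hTsub

theorem le_apply_of_tendsto_smul_div {x y : ι → ℝ} {k : ι} {L : ℝ} (hy : ∀ i, 0 ≤ y i)
    (hyx : ∀ i, y i ≤ x i) (hL : Tendsto (fun h : ℝ => T (h • y) k / h) atTop (𝓝 L)) :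
    L ≤ T x k := by
  refine le_of_tendsto hL ?_
  filter_upwards [eventually_gt_atTop 1] with h hh
  have h0 : 0 < h := one_pos.trans hh
  rw [div_le_iff₀' h0]
  calc T (h • y) k ≤ T (h • x) k :=
        hTmono k _ _ (fun i => mul_nonneg h0.le (hy i)) (fun i => mul_le_mul_of_nonneg_left (hyx i) h0.le)
    _ ≤ h * T x k := hTsub k x (fun i => (hy i).trans (hyx i)) h hh

theorem asymptotic_eigenvalue_le_eigenvalue_s17 [Fintype ι] [Nonempty ι] {x xinf : ι → ℝ}
    {μ laminf : ℝ} (hx : ∀ i, 0 < x i) (hxinf : ∀ i, 0 < xinf i) (hfix : T x = μ • x)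
    (hasym : ∀ k, Tendsto (fun h : ℝ => T (h • xinf) k / h) atTop (𝓝 (laminf * xinf k))) :
    laminf ≤ μ := by
  obtain ⟨t, ht, hle, i, hi⟩ := exists_pos_mul_le_and_eq_mul hx hxinf
  have hlim : Tendsto (fun h : ℝ => T (h • t • xinf) i / h) atTop (𝓝 (t * (laminf * xinf i))) := by
    simpa only [smul_smul] using (hasym i).comp_mul_const_div (f := fun s => T (s • xinf) i) ht
  have key := le_apply_of_tendsto_smul_div T hTmono hTsub
    (fun j => mul_nonneg ht.le (hxinf j).le) hle hlim
  rw [hfix, Pi.smul_apply, smul_eq_mul, hi] at key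
  exact le_of_mul_le_mul_right (by linarith) (mul_pos ht (hxinf i))

end Subhomogeneous

theorem cevp_efficiency_upper_bound_general
    {K : ℕ}
    (T : (Fin K → ℝ) → (Fin K → ℝ))
    (hTpos : ∀ k, ∀ x : Fin K → ℝ, (∀ i, 0 ≤ x i) → 0 < T x k)
    (hTmono : ∀ k, ∀ x y : Fin K → ℝ, (∀ i, 0 ≤ x i) → (∀ i, x i ≤ y i) → T x k ≤ T y k)
    (hTscal : ∀ k, ∀ x : Fin K → ℝ, (∀ i, 0 ≤ x i) → ∀ α : ℝ, 1 < α →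
      T (α • x) k < α * T x k)
    (n : (Fin K → ℝ) → ℝ)
    (hnhom : ∀ (c : ℝ) (x), n (c • x) = |c| * n x)
    (hnmono : ∀ x y : Fin K → ℝ, (∀ i, 0 ≤ x i) → (∀ i, x i ≤ y i) → n x ≤ n y)
    (x_ : ℝ → (Fin K → ℝ)) (c_ : ℝ → ℝ)
    (hxpos : ∀ θ : ℝ, 0 < θ → ∀ i, 0 < x_ θ i)
    (hcpos : ∀ θ : ℝ, 0 < θ → 0 < c_ θ)
    (hfix : ∀ θ : ℝ, 0 < θ → T (x_ θ) = (1 / c_ θ) • x_ θ)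
    (hbudget : ∀ θ : ℝ, 0 < θ → n (x_ θ) = θ)
    (Tinf : (Fin K → ℝ) → (Fin K → ℝ))
    (hTinf : ∀ (k : Fin K) (x : Fin K → ℝ), (∀ i, 0 ≤ x i) →
      Tendsto (fun h : ℝ => T (h • x) k / h) atTop (nhds (Tinf x k)))
    (xinf : Fin K → ℝ) (laminf : ℝ)
    (hxinf : ∀ i, 0 < xinf i) (hlaminf : 0 < laminf)
    (hasymfix : Tinf xinf = laminf • xinf) :
    ∀ θ : ℝ, 0 < θ → c_ θ / θ ≤ min (1 / n (T 0)) (1 / (laminf * θ)) := by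
  intro θ hθ
  have hc := hcpos θ hθ
  have hx := hxpos θ hθ
  have hnx : 0 < n (x_ θ) := (hbudget θ hθ).symm ▸ hθ
  have : Nonempty (Fin K) := nonempty_of_apply_ne_zero n hnhom hnx.ne'
  have hT0 : ∀ i, 0 < T 0 i := fun i => hTpos i 0 fun _ => le_rfl
  have hnT0 : 0 < n (T 0) := by
    obtain ⟨t, ht, hle, -⟩ := exists_pos_mul_le_and_eq_mul hT0 hx
    exact apply_pos_of_mul_le n hnhom hnmono ht (fun i => (hx i).le) hle hnx
  have hnT0_le : n (T 0) ≤ θ / c_ θ := by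
    calc n (T 0) ≤ n (T (x_ θ)) :=
          hnmono _ _ (fun i => (hT0 i).le) fun i => hTmono i 0 _ (fun _ => le_rfl) fun i => (hx i).le
      _ = θ / c_ θ := by rw [hfix θ hθ, hnhom, hbudget θ hθ, abs_of_pos (by positivity)]; ring
  have hlam : laminf ≤ 1 / c_ θ :=
    asymptotic_eigenvalue_le_eigenvalue_s17 T hTmono (fun k y hy α hα => (hTscal k y hy α hα).le)
      hx hxinf (hfix θ hθ) fun k => by
        simpa only [hasymfix, Pi.smul_apply, smul_eq_mul] using hTinf k xinf fun i => (hxinf i).le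
  refine le_min ?_ ?_
  · rw [← one_div_div]
    exact one_div_le_one_div_of_le hnT0 hnT0_le
  · rw [← div_div]
    exact div_le_div_of_nonneg_right ((le_one_div hc hlaminf).mpr hlam) hθ.le

/-- The resource efficiency satisfies
`E(θ) = U(θ)/θ ≤ min{1/‖T(0)‖, 1/(λ_∞ θ)}` for every `θ > 0`. -/
theorem cevp_efficiency_upper_bound
    {K : ℕ}
    (T : (Fin K → ℝ) → (Fin K → ℝ))
    (hTpos : ∀ k, ∀ x : Fin K → ℝ, (∀ i, 0 ≤ x i) → 0 < T x k)
    (hTmono : ∀ k, ∀ x y : Fin K → ℝ, (∀ i, 0 ≤ x i) → (∀ i, x i ≤ y i) → T x k ≤ T y k)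
    (hTscal : ∀ k, ∀ x : Fin K → ℝ, (∀ i, 0 ≤ x i) → ∀ α : ℝ, 1 < α →
      T (α • x) k < α * T x k)
    (n : (Fin K → ℝ) → ℝ)
    (hn0 : ∀ x, n x = 0 ↔ x = 0)
    (hnhom : ∀ (c : ℝ) (x), n (c • x) = |c| * n x)
    (hntri : ∀ x y, n (x + y) ≤ n x + n y)
    (hnmono : ∀ x y : Fin K → ℝ, (∀ i, 0 ≤ x i) → (∀ i, x i ≤ y i) → n x ≤ n y)
    (x_ : ℝ → (Fin K → ℝ)) (c_ : ℝ → ℝ)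
    (hxpos : ∀ θ : ℝ, 0 < θ → ∀ i, 0 < x_ θ i)
    (hcpos : ∀ θ : ℝ, 0 < θ → 0 < c_ θ)
    (hfix : ∀ θ : ℝ, 0 < θ → T (x_ θ) = (1 / c_ θ) • x_ θ)
    (hbudget : ∀ θ : ℝ, 0 < θ → n (x_ θ) = θ)
    (huniq : ∀ θ : ℝ, 0 < θ → ∀ (y : Fin K → ℝ) (d : ℝ), (∀ i, 0 < y i) → 0 < d →
      T y = (1 / d) • y → n y = θ → y = x_ θ ∧ d = c_ θ)
    (Tinf : (Fin K → ℝ) → (Fin K → ℝ))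
    (hTinf : ∀ (k : Fin K) (x : Fin K → ℝ), (∀ i, 0 ≤ x i) →
      Tendsto (fun h : ℝ => T (h • x) k / h) atTop (nhds (Tinf x k)))
    (xinf : Fin K → ℝ) (laminf : ℝ)
    (hxinf : ∀ i, 0 < xinf i) (hlaminf : 0 < laminf)
    (hasymfix : Tinf xinf = laminf • xinf) (hasymnorm : n xinf = 1)
    (hasymuniq : ∀ (y : Fin K → ℝ) (μ : ℝ), (∀ i, 0 < y i) → 0 < μ →
      Tinf y = μ • y → n y = 1 → y = xinf ∧ μ = laminf) :
    ∀ θ : ℝ, 0 < θ → c_ θ / θ ≤ min (1 / n (T 0)) (1 / (laminf * θ)) :=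
  cevp_efficiency_upper_bound_general T hTpos hTmono hTscal n hnhom hnmono x_ c_ hxpos hcpos hfix
    hbudget Tinf hTinf xinf laminf hxinf hlaminf hasymfix
end
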